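/- Under the hypotheses that ‖D‖₂ = ‖D⁺‖₂ = 1, A_l = f_l f⁺ A D⁺, A_l⁺ = D A⁺ f f_l⁺, and f, f_l are nonzero vectors, the generalized condition number of the low-resolution system matrix is bounded by that of the original: cond(A_l) ≤ cond(A). -/
import Mathlib


open Matrix
open scoped Matrix.Norms.L2Operator

/-- The operator norm of a real matrix induced by the Euclidean norms. -/
noncomputable def opNorm {m n : ℕ} (M : Matrix (Fin m) (Fin n) ℝ) : ℝ :=
  ‖LinearMap.toContinuousLinearMap (Matrix.toEuclideanLin M)‖

/-- The four Moore-Penrose conditions: `B` is the Moore-Penrose pseudoinverse of `A`. -/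
def IsMoorePenrose {m n : ℕ} (A : Matrix (Fin m) (Fin n) ℝ)
    (B : Matrix (Fin n) (Fin m) ℝ) : Prop :=
  A * B * A = A ∧ B * A * B = B ∧ (A * B)ᵀ = A * B ∧ (B * A)ᵀ = B * A

lemma opNorm_eq_l2 {m n : ℕ} (M : Matrix (Fin m) (Fin n) ℝ) : opNorm M = ‖M‖ := rfl

lemma one_by_one_eq {B : Matrix (Fin 1) (Fin 1) ℝ} : B = (B 0 0) • 1 := by
  ext i j; fin_cases i; fin_cases j; simp

lemma vec_cond {M : ℕ} {f : Matrix (Fin M) (Fin 1) ℝ} {fp : Matrix (Fin 1) (Fin M) ℝ}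
    (hf : f ≠ 0) (h : IsMoorePenrose f fp) : ‖f‖ * ‖fp‖ = 1 := by
  obtain ⟨h1, h2, h3, h4⟩ := h
  -- fp * f = 1
  have hs : fp * f = 1 := by
    by_contra hne
    have hB : fp * f = ((fp * f) 0 0) • 1 := one_by_one_eq
    set s := (fp * f) 0 0 with hsdef
    have hfp0 : fp = 0 := by
      have : s • fp = fp := by
        calc s • fp = ((fp * f) * fp : _) := by rw [hB]; simp [Matrix.smul_mul]
        _ = fp := h2
      have hs1 : s ≠ 1 := fun hs1 => hne (by rw [hB, hs1, one_smul])
      have hz : (s - 1) • fp = 0 := by rw [sub_smul, this, one_smul, sub_self]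
      rcases smul_eq_zero.mp hz with h' | h'
      · exact absurd (by linarith [sub_eq_zero.mp h'] : s = 1) hs1
      · exact h'
    exact hf (by rw [← h1, hfp0]; simp)
  -- c := (fᵀ f) 0 0 ; c • fp = fᵀ
  have hc : fᵀ * f = ((fᵀ * f) 0 0) • 1 := one_by_one_eq
  set c := (fᵀ * f) 0 0 with hcdef
  have hcfp : c • fp = fᵀ := by
    calc c • fp = (fᵀ * f) * fp := by rw [hc]; simp [Matrix.smul_mul]
    _ = fᵀ * (f * fp) := by rw [Matrix.mul_assoc]
    _ = fᵀ * (f * fp)ᵀ := by rw [h3]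
    _ = fᵀ * (fpᵀ * fᵀ) := by rw [Matrix.transpose_mul]
    _ = (fp * f)ᵀ * fᵀ := by rw [Matrix.transpose_mul, Matrix.mul_assoc]
    _ = fᵀ := by rw [hs]; simp
  -- fᴴ = fᵀ
  have hct : fᴴ = fᵀ := by ext i j; simp
  have hnormsq : ‖f‖ * ‖f‖ = c := by
    have := Matrix.l2_opNorm_conjTranspose_mul_self f
    rw [hct, hc, norm_smul, norm_one] at this
    have hcnn : 0 ≤ c := by
      rw [hcdef]
      simp only [Matrix.mul_apply, Matrix.transpose_apply]
      exact Finset.sum_nonneg fun i _ => mul_self_nonneg _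
    rw [Real.norm_eq_abs, abs_of_nonneg hcnn, mul_one] at this
    exact this.symm
  have hcpos : 0 < c := by
    rcases lt_or_eq_of_le (by rw [← hnormsq]; positivity : (0:ℝ) ≤ c) with h' | h'
    · exact h'
    · exfalso
      have : ‖f‖ = 0 := by nlinarith [hnormsq]
      exact hf (norm_eq_zero.mp this)
  have hft : ‖fᵀ‖ = ‖f‖ := by rw [← hct, Matrix.l2_opNorm_conjTranspose]
  have : c * ‖fp‖ = ‖f‖ := by
    rw [← hft, ← hcfp, norm_smul, Real.norm_eq_abs, abs_of_pos hcpos]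
  nlinarith [norm_nonneg fp, norm_nonneg f]

/-- Under the hypotheses `‖D‖₂ = ‖D⁺‖₂ = 1`, `A_l = f_l f⁺ A D⁺`, `A_l⁺ = D A⁺ f f_l⁺`,
with `f, f_l` nonzero vectors, the generalized condition number of the low-resolution
system matrix is bounded by that of the original: `cond(A_l) ≤ cond(A)`. -/
theorem stmt7 {M N Nl : ℕ}
    (A : Matrix (Fin M) (Fin N) ℝ) (Ap : Matrix (Fin N) (Fin M) ℝ)
    (D : Matrix (Fin Nl) (Fin N) ℝ) (Dp : Matrix (Fin N) (Fin Nl) ℝ)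
    (f fl : Matrix (Fin M) (Fin 1) ℝ) (fp flp : Matrix (Fin 1) (Fin M) ℝ)
    (Al : Matrix (Fin M) (Fin Nl) ℝ) (Alp : Matrix (Fin Nl) (Fin M) ℝ)
    (hf : f ≠ 0) (hfl : fl ≠ 0)
    (hA : IsMoorePenrose A Ap) (hD : IsMoorePenrose D Dp)
    (hfp : IsMoorePenrose f fp) (hflp : IsMoorePenrose fl flp)
    (hAlp : IsMoorePenrose Al Alp)
    (hDn : opNorm D = 1) (hDpn : opNorm Dp = 1)
    (hAl : Al = fl * fp * A * Dp) (hAlpEq : Alp = D * Ap * f * flp) :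
    opNorm Al * opNorm Alp ≤ opNorm A * opNorm Ap := by
  have hDn' : ‖D‖ = 1 := hDn
  have hDpn' : ‖Dp‖ = 1 := hDpn
  have hv1 : ‖f‖ * ‖fp‖ = 1 := vec_cond hf hfp
  have hv2 : ‖fl‖ * ‖flp‖ = 1 := vec_cond hfl hflp
  have h1 : ‖Al‖ ≤ ‖fl‖ * ‖fp‖ * ‖A‖ * ‖Dp‖ := by
    rw [hAl]
    calc ‖fl * fp * A * Dp‖ ≤ ‖fl * fp * A‖ * ‖Dp‖ := Matrix.l2_opNorm_mul _ _
    _ ≤ (‖fl * fp‖ * ‖A‖) * ‖Dp‖ :=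
        mul_le_mul_of_nonneg_right (Matrix.l2_opNorm_mul _ _) (norm_nonneg _)
    _ ≤ ‖fl‖ * ‖fp‖ * ‖A‖ * ‖Dp‖ :=
        mul_le_mul_of_nonneg_right (mul_le_mul_of_nonneg_right
          (Matrix.l2_opNorm_mul fl fp) (norm_nonneg _)) (norm_nonneg _)
  have h2 : ‖Alp‖ ≤ ‖D‖ * ‖Ap‖ * ‖f‖ * ‖flp‖ := by
    rw [hAlpEq]
    calc ‖D * Ap * f * flp‖ ≤ ‖D * Ap * f‖ * ‖flp‖ := Matrix.l2_opNorm_mul _ _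
    _ ≤ (‖D * Ap‖ * ‖f‖) * ‖flp‖ :=
        mul_le_mul_of_nonneg_right (Matrix.l2_opNorm_mul _ _) (norm_nonneg _)
    _ ≤ ‖D‖ * ‖Ap‖ * ‖f‖ * ‖flp‖ :=
        mul_le_mul_of_nonneg_right (mul_le_mul_of_nonneg_right
          (Matrix.l2_opNorm_mul D Ap) (norm_nonneg _)) (norm_nonneg _)
  show ‖Al‖ * ‖Alp‖ ≤ ‖A‖ * ‖Ap‖
  have key : (‖fl‖ * ‖fp‖ * ‖A‖ * ‖Dp‖) * (‖D‖ * ‖Ap‖ * ‖f‖ * ‖flp‖) = ‖A‖ * ‖Ap‖ := by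
    rw [hDn', hDpn']
    linear_combination (‖fl‖ * ‖flp‖ * ‖A‖ * ‖Ap‖) * hv1 + (‖A‖ * ‖Ap‖) * hv2
  calc ‖Al‖ * ‖Alp‖ ≤ (‖fl‖ * ‖fp‖ * ‖A‖ * ‖Dp‖) * (‖D‖ * ‖Ap‖ * ‖f‖ * ‖flp‖) := by
        apply mul_le_mul h1 h2 (norm_nonneg _)
        positivity
  _ = ‖A‖ * ‖Ap‖ := key
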